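/- arXiv:1201.1798 — 2 statements merged into one kernel-verified Lean document; each statement's English description precedes it below -/
import Mathlib

section
/- Let d ≥ 1 and let V_1, …, V_n (n ≥ 2) be nonzero proper linear subspaces of ℝ^d with positive weights ω_1, …, ω_n, and set m := Σ_{j=1}^n ω_j·dim(V_j). Then max_{i≠j} ⟨P_{V_i}, P_{V_j}⟩ = (m²/d − Σ_{j=1}^n ω_j²·dim(V_j)) / (Σ_{i≠j} ω_i ω_j) holds if and only if {(V_j, ω_j)}_{j=1}^n is an equiangular tight fusion frame, i.e. ⟨P_{V_i}, P_{V_j}⟩ takes the same value for all i ≠ j and Σ_{j=1}^n ω_j P_{V_j} = (m/d)·Id. -/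
open scoped BigOperators

/-- The orthogonal projection onto a subspace `V` of `ℝ^d`, as a linear endomorphism. -/
noncomputable def proj {d : ℕ} (V : Submodule ℝ (EuclideanSpace ℝ (Fin d))) :
    EuclideanSpace ℝ (Fin d) →ₗ[ℝ] EuclideanSpace ℝ (Fin d) :=
  V.subtype ∘ₗ (V.orthogonalProjection).toLinearMap

/-- `⟨P_V, P_W⟩ = trace (P_V P_W)`. -/
noncomputable def trPP {d : ℕ} (V W : Submodule ℝ (EuclideanSpace ℝ (Fin d))) : ℝ :=
  LinearMap.trace ℝ _ (proj V ∘ₗ proj W)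

/-- With `n ≥ 2` elements, the set of off-diagonal pairs of indices is nonempty. -/
theorem offDiag_univ_nonempty {n : ℕ} (hn : 2 ≤ n) :
    (Finset.univ.offDiag (α := Fin n)).Nonempty := by
  rw [← Finset.coe_nonempty, Finset.coe_offDiag, Set.offDiag_nonempty]
  exact ⟨⟨0, by omega⟩, by simp, ⟨1, by omega⟩, by simp, by simp [Fin.ext_iff]⟩

/-!
Put `S = ∑ ω_j P_{V_j}`. Then `tr S = m` and
`tr S² = ∑ ω_j² dim V_j + ∑_{i ≠ j} ω_i ω_j ⟨P_{V_i}, P_{V_j}⟩`.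
As `S` is symmetric, `tr (S - (m/d) Id)² ≥ 0` gives `tr S² ≥ m²/d`, with equality iff
`S = (m/d) Id`. So the weighted average of the off-diagonal `⟨P_{V_i}, P_{V_j}⟩`, and a fortiori
their maximum, is at least the right-hand side; the maximum attains it exactly when both
inequalities are equalities, i.e. the frame is tight and every off-diagonal value equals the
maximum.
-/

open Finset

namespace Finset

lemma forall_eq_sup'_iff_exists_forall_eq {ι α : Type*} [SemilatticeSup α]
    {s : Finset ι} (H : s.Nonempty) (f : ι → α) :
    (∀ i ∈ s, f i = s.sup' H f) ↔ ∃ c, ∀ i ∈ s, f i = c := by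
  refine ⟨fun h => ⟨_, h⟩, fun ⟨c, hc⟩ i hi => ?_⟩
  rw [hc i hi, sup'_congr H rfl hc, sup'_const]

variable {ι 𝕜 : Type*} [CommRing 𝕜] [LinearOrder 𝕜] [IsStrictOrderedRing 𝕜]
  {s : Finset ι} (H : s.Nonempty) {w f : ι → 𝕜}

lemma sum_mul_le_sup'_mul_sum (hw : ∀ i ∈ s, 0 ≤ w i) :
    ∑ i ∈ s, w i * f i ≤ s.sup' H f * ∑ i ∈ s, w i := by
  rw [mul_sum]
  exact sum_le_sum fun i hi => by
    rw [mul_comm (s.sup' H f)]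
    exact mul_le_mul_of_nonneg_left (le_sup' f hi) (hw i hi)

lemma sum_mul_eq_sup'_mul_sum_iff (hw : ∀ i ∈ s, 0 < w i) :
    ∑ i ∈ s, w i * f i = s.sup' H f * ∑ i ∈ s, w i ↔ ∀ i ∈ s, f i = s.sup' H f := by
  have hgap : s.sup' H f * ∑ i ∈ s, w i - ∑ i ∈ s, w i * f i =
      ∑ i ∈ s, w i * (s.sup' H f - f i) := by
    rw [mul_comm, sum_mul, ← sum_sub_distrib]
    exact sum_congr rfl fun i _ => by ring
  have hnonneg : ∀ i ∈ s, 0 ≤ w i * (s.sup' H f - f i) := fun i hi =>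
    mul_nonneg (hw i hi).le (sub_nonneg.mpr (le_sup' f hi))
  rw [eq_comm, ← sub_eq_zero, hgap, sum_eq_zero_iff_of_nonneg hnonneg]
  refine forall₂_congr fun i hi => ?_
  rw [mul_eq_zero, or_iff_right (hw i hi).ne', sub_eq_zero, eq_comm]

end Finset

namespace LinearMap

variable {R M : Type*} [CommRing R] [AddCommGroup M] [Module R M]

lemma trace_comp_self_sum_smul {ι : Type*} [Fintype ι] [DecidableEq ι] (ω : ι → R)
    (P : ι → M →ₗ[R] M) (hP : ∀ j, P j ∘ₗ P j = P j) :
    trace R M ((∑ j, ω j • P j) ∘ₗ ∑ j, ω j • P j) =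
      ∑ j, ω j ^ 2 * trace R M (P j) +
        ∑ ij ∈ univ.offDiag, ω ij.1 * ω ij.2 * trace R M (P ij.1 ∘ₗ P ij.2) := by
  have hexpand : (∑ j, ω j • P j) ∘ₗ ∑ j, ω j • P j =
      ∑ ij ∈ univ ×ˢ univ, (ω ij.1 * ω ij.2) • (P ij.1 ∘ₗ P ij.2) := by
    rw [sum_product]
    show (∑ j, ω j • P j) * ∑ j, ω j • P j = _
    rw [sum_mul_sum]
    exact sum_congr rfl fun i _ => sum_congr rfl fun j _ => by
      rw [smul_mul_assoc, mul_smul_comm, smul_smul]; rfl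
  rw [hexpand, map_sum, ← diag_union_offDiag, sum_union (disjoint_diag_offDiag _), sum_diag]
  simp only [map_smul, smul_eq_mul, hP, sq]

lemma trace_comp_self_sub_smul_id [Module.Free R M] [Module.Finite R M] (T : M →ₗ[R] M) (c : R) :
    trace R M ((T - c • id) ∘ₗ (T - c • id)) =
      trace R M (T ∘ₗ T) - 2 * c * trace R M T + c ^ 2 * Module.finrank R M := by
  have hexpand : (T - c • id) ∘ₗ (T - c • id) = T ∘ₗ T - (2 * c) • T + c ^ 2 • id := by
    show (T - c • 1) * (T - c • 1) = T * T - (2 * c) • T + c ^ 2 • (1 : Module.End R M)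
    simp only [sub_mul, mul_sub, smul_mul_assoc, mul_smul_comm, one_mul, mul_one]
    module
  rw [hexpand, map_add, map_sub, map_smul, map_smul, trace_id]
  simp only [smul_eq_mul]

/-- With `x / 0 = 0` this also holds when `V` is zero-dimensional. -/
lemma trace_comp_self_sub_trace_div_finrank_smul_id {K V : Type*} [Field K] [AddCommGroup V]
    [Module K V] [FiniteDimensional K V] (T : V →ₗ[K] V) :
    trace K V ((T - (trace K V T / Module.finrank K V) • id) ∘ₗ
        (T - (trace K V T / Module.finrank K V) • id)) =
      trace K V (T ∘ₗ T) - trace K V T ^ 2 / Module.finrank K V := by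
  rw [trace_comp_self_sub_smul_id]
  rcases eq_or_ne (Module.finrank K V : K) 0 with h | h
  · simp [h]
  · field_simp
    ring

end LinearMap

namespace LinearMap.IsSymmetric

variable {E : Type*} [NormedAddCommGroup E] [InnerProductSpace ℝ E] {T : E →ₗ[ℝ] E}

lemma trace_comp_self_eq_sum_norm_sq (hT : T.IsSymmetric) {ι : Type*} [Fintype ι]
    (b : OrthonormalBasis ι ℝ E) : trace ℝ E (T ∘ₗ T) = ∑ i, ‖T (b i)‖ ^ 2 := by
  rw [trace_eq_sum_inner _ b]
  exact Fintype.sum_congr _ _ fun i => by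
    rw [comp_apply, ← hT, real_inner_self_eq_norm_sq]

lemma sub_smul_id (hT : T.IsSymmetric) (c : ℝ) : (T - c • id).IsSymmetric :=
  hT.sub (IsSymmetric.id.smul (conj_trivial c))

variable [FiniteDimensional ℝ E]

lemma trace_comp_self_nonneg (hT : T.IsSymmetric) : 0 ≤ trace ℝ E (T ∘ₗ T) := by
  rw [hT.trace_comp_self_eq_sum_norm_sq (stdOrthonormalBasis ℝ E)]
  positivity

lemma trace_comp_self_eq_zero_iff (hT : T.IsSymmetric) : trace ℝ E (T ∘ₗ T) = 0 ↔ T = 0 := by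
  set b := stdOrthonormalBasis ℝ E
  rw [hT.trace_comp_self_eq_sum_norm_sq b,
    Finset.sum_eq_zero_iff_of_nonneg fun i _ => sq_nonneg _]
  simp only [Finset.mem_univ, true_implies, sq_eq_zero_iff, norm_eq_zero]
  refine ⟨fun h => b.toBasis.ext fun i => ?_, fun h i => by simp [h]⟩
  simpa using h i

lemma sq_trace_div_finrank_le_trace_comp_self (hT : T.IsSymmetric) :
    trace ℝ E T ^ 2 / Module.finrank ℝ E ≤ trace ℝ E (T ∘ₗ T) := by
  have := (hT.sub_smul_id (trace ℝ E T / Module.finrank ℝ E)).trace_comp_self_nonneg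
  rwa [trace_comp_self_sub_trace_div_finrank_smul_id, sub_nonneg] at this

lemma trace_comp_self_eq_iff (hT : T.IsSymmetric) :
    trace ℝ E (T ∘ₗ T) = trace ℝ E T ^ 2 / Module.finrank ℝ E ↔
      T = (trace ℝ E T / Module.finrank ℝ E) • id := by
  rw [← sub_eq_zero, ← trace_comp_self_sub_trace_div_finrank_smul_id,
    (hT.sub_smul_id _).trace_comp_self_eq_zero_iff, sub_eq_zero]

end LinearMap.IsSymmetric

section Projection

variable {d : ℕ} (V : Submodule ℝ (EuclideanSpace ℝ (Fin d)))

lemma isSymmetricProjection_proj : (proj V).IsSymmetricProjection :=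
  V.isSymmetricProjection_starProjection

lemma trace_proj : LinearMap.trace ℝ _ (proj V) = Module.finrank ℝ V := by
  rw [(LinearMap.IsIdempotentElem.isProj_range _
    (isSymmetricProjection_proj V).isIdempotentElem).trace]
  exact congrArg (fun W : Submodule ℝ _ => (Module.finrank ℝ W : ℝ)) V.range_starProjection

lemma isSymmetric_sum_smul_proj {ι : Type*} [Fintype ι] (ω : ι → ℝ)
    (V : ι → Submodule ℝ (EuclideanSpace ℝ (Fin d))) :
    (∑ j, ω j • proj (V j)).IsSymmetric :=
  LinearMap.isSymmetric_sum _ fun j _ =>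
    (isSymmetricProjection_proj (V j)).isSymmetric.smul (conj_trivial (ω j))

end Projection

theorem stmt4_general {d n : ℕ} (hn : 2 ≤ n)
    (V : Fin n → Submodule ℝ (EuclideanSpace ℝ (Fin d)))
    (ω : Fin n → ℝ) (hω : ∀ j, 0 < ω j)
    (m : ℝ) (hm : m = ∑ j, ω j * (Module.finrank ℝ (V j) : ℝ)) :
    Finset.sup' (Finset.univ.offDiag (α := Fin n)) (offDiag_univ_nonempty hn)
        (fun ij => trPP (V ij.1) (V ij.2)) =
      (m ^ 2 / d - ∑ j, ω j ^ 2 * (Module.finrank ℝ (V j) : ℝ)) /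
        (∑ ij ∈ Finset.univ.offDiag (α := Fin n), ω ij.1 * ω ij.2)
    ↔
    ((∃ c : ℝ, ∀ i j, i ≠ j → trPP (V i) (V j) = c) ∧
      ∑ j, ω j • proj (V j) =
        (m / d) • (LinearMap.id : EuclideanSpace ℝ (Fin d) →ₗ[ℝ] EuclideanSpace ℝ (Fin d))) := by
  set S := ∑ j, ω j • proj (V j)
  have hpos : ∀ ij ∈ univ.offDiag, 0 < ω ij.1 * ω ij.2 := fun ij _ => mul_pos (hω _) (hω _)
  have hW : 0 < ∑ ij ∈ univ.offDiag, ω ij.1 * ω ij.2 :=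
    sum_pos hpos (offDiag_univ_nonempty hn)
  have htrace : LinearMap.trace ℝ _ S = m := by
    simp only [S, map_sum, map_smul, trace_proj, smul_eq_mul, hm]
  have htrace_sq : LinearMap.trace ℝ _ (S ∘ₗ S) = ∑ j, ω j ^ 2 * (Module.finrank ℝ (V j) : ℝ) +
      ∑ ij ∈ univ.offDiag, ω ij.1 * ω ij.2 * trPP (V ij.1) (V ij.2) := by
    simp only [S, LinearMap.trace_comp_self_sum_smul ω _
      fun j => (isSymmetricProjection_proj (V j)).isIdempotentElem, trace_proj, trPP]
  have hS : S.IsSymmetric := isSymmetric_sum_smul_proj ω V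
  have hlower := hS.sq_trace_div_finrank_le_trace_comp_self
  rw [htrace, htrace_sq, finrank_euclideanSpace_fin] at hlower
  have hupper := sum_mul_le_sup'_mul_sum (offDiag_univ_nonempty hn)
    (f := fun ij => trPP (V ij.1) (V ij.2)) fun ij hij => (hpos ij hij).le
  have hscalar := hS.trace_comp_self_eq_iff
  rw [htrace, htrace_sq, finrank_euclideanSpace_fin] at hscalar
  have hequi := sum_mul_eq_sup'_mul_sum_iff (offDiag_univ_nonempty hn)
    (f := fun ij => trPP (V ij.1) (V ij.2)) hpos
  rw [forall_eq_sup'_iff_exists_forall_eq] at hequi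
  simp only [mem_offDiag, mem_univ, true_and, Prod.forall] at hequi
  rw [eq_div_iff hW.ne', ← hscalar, ← hequi]
  constructor
  · intro hmax
    constructor <;> linarith
  · rintro ⟨hequi, htight⟩
    linarith

theorem stmt4 {d n : ℕ} (hd : 1 ≤ d) (hn : 2 ≤ n)
    (V : Fin n → Submodule ℝ (EuclideanSpace ℝ (Fin d)))
    (hVbot : ∀ j, V j ≠ ⊥) (hVtop : ∀ j, V j ≠ ⊤)
    (ω : Fin n → ℝ) (hω : ∀ j, 0 < ω j)
    (m : ℝ) (hm : m = ∑ j, ω j * (Module.finrank ℝ (V j) : ℝ)) :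
    Finset.sup' (Finset.univ.offDiag (α := Fin n)) (offDiag_univ_nonempty hn)
        (fun ij => trPP (V ij.1) (V ij.2)) =
      (m ^ 2 / d - ∑ j, ω j ^ 2 * (Module.finrank ℝ (V j) : ℝ)) /
        (∑ ij ∈ Finset.univ.offDiag (α := Fin n), ω ij.1 * ω ij.2)
    ↔
    ((∃ c : ℝ, ∀ i j, i ≠ j → trPP (V i) (V j) = c) ∧
      ∑ j, ω j • proj (V j) =
        (m / d) • (LinearMap.id : EuclideanSpace ℝ (Fin d) →ₗ[ℝ] EuclideanSpace ℝ (Fin d))) :=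
  stmt4_general hn V ω hω m hm
end

section
/- Let p ≥ 1 be an integer and let {(V_j, ω_j)}_{j=1}^n be a tight p-fusion frame in ℝ^d. Then {(V_j, ω'_j)}_{j=1}^n with ω'_j := ω_j·Π_{l=1}^{p−1}(l + dim(V_j)/2) is a tight fusion frame, i.e. there is a constant A' > 0 with Σ_{j=1}^n ω'_j ‖P_{V_j}(x)‖^{2} = A' ‖x‖^{2} for all x ∈ ℝ^d. -/
/-!
Choose an orthonormal basis, so that `‖P_V x‖² = xᵀ M x` with `M` symmetric, idempotent and of
trace `dim V`. For the quadratic polynomial `q = xᵀ M x` one has `|∇q|² = 4 q` and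
`Δq = 2 tr M`, hence `Δ(q^(k+1)) = (k+1)(4k + 2 tr M) q^k`. The tight `p`-fusion frame identity
`∑ ω_j q_{V_j}^p = A q_{ℝ^d}^p` is an identity of polynomials, and applying `Δ^(p-1)` to it
lowers every `p`-th power to the first power, with the factor
`∏_{k=1}^{p-1} (k+1)(4k + 2 dim V) = ∏_{k=1}^{p-1} 4(k+1) · ∏_{k=1}^{p-1} (k + dim V / 2)`.
The first product does not depend on `V` and cancels.
-/

open scoped BigOperators

namespace MvPolynomial

variable {σ R : Type*} [CommRing R]

lemma pderiv_pow_succ (i : σ) (f : MvPolynomial σ R) (n : ℕ) :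
    pderiv i (f ^ (n + 1)) = C ((n : R) + 1) * (f ^ n * pderiv i f) := by
  rw [pderiv_pow, Nat.add_sub_cancel, mul_assoc, map_add, map_natCast, map_one, Nat.cast_succ]

variable [Fintype σ]

noncomputable def laplacian : Module.End R (MvPolynomial σ R) :=
  ∑ i, (pderiv i).toLinearMap ∘ₗ (pderiv i).toLinearMap

lemma laplacian_apply (f : MvPolynomial σ R) : laplacian f = ∑ i, pderiv i (pderiv i f) := by
  simp [laplacian, LinearMap.sum_apply]

lemma laplacian_pow_succ {f : MvPolynomial σ R} {a b : R}
    (hgrad : ∑ i, pderiv i f ^ 2 = C a * f) (hlap : laplacian f = C b) (k : ℕ) :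
    laplacian (f ^ (k + 1)) = C ((k + 1) * (a * k + b)) * f ^ k := by
  have hcross : ∑ i, pderiv i (f ^ k) * pderiv i f = C (a * k) * f ^ k := by
    rcases k with _ | k
    · simp
    · simp_rw [pderiv_pow_succ, mul_assoc, ← Finset.mul_sum, ← sq, hgrad]
      simp only [map_mul, map_add, map_one, map_natCast]
      push_cast
      ring
  rw [laplacian_apply] at hlap ⊢
  simp_rw [pderiv_pow_succ, pderiv_C_mul, pderiv_mul, ← Finset.mul_sum, Finset.sum_add_distrib,
    hcross, ← Finset.mul_sum, hlap]
  simp only [map_mul, map_add]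
  ring

lemma laplacian_pow_apply_pow {f : MvPolynomial σ R} {a b : R}
    (hgrad : ∑ i, pderiv i f ^ 2 = C a * f) (hlap : laplacian f = C b) (m : ℕ) :
    (laplacian ^ m) (f ^ (m + 1)) = C (∏ k ∈ Finset.Icc 1 m, (k + 1) * (a * k + b)) * f := by
  induction m with
  | zero => simp
  | succ m ih =>
    rw [pow_succ, Module.End.mul_apply, laplacian_pow_succ hgrad hlap, ← smul_eq_C_mul, map_smul,
      ih, smul_eq_C_mul, ← mul_assoc, ← map_mul, Finset.prod_Icc_succ_top (by omega)]
    congr 2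
    push_cast
    ring

end MvPolynomial

open MvPolynomial

namespace Matrix

variable {n R : Type*} [Fintype n] [CommRing R]

noncomputable def toQuadraticMvPolynomial (M : Matrix n n R) : MvPolynomial n R :=
  ∑ i, X i * M.toMvPolynomial i

lemma toMvPolynomial_eq_sum (M : Matrix n n R) (i : n) :
    M.toMvPolynomial i = ∑ j, C (M i j) * X j := by
  simp only [toMvPolynomial, C_mul_X_eq_monomial]

lemma eval_toQuadraticMvPolynomial (M : Matrix n n R) (c : n → R) :
    eval c M.toQuadraticMvPolynomial = c ⬝ᵥ M *ᵥ c := by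
  simp [toQuadraticMvPolynomial, toMvPolynomial_eval_eq_apply, dotProduct]

lemma pderiv_toMvPolynomial (M : Matrix n n R) (i k : n) :
    pderiv k (M.toMvPolynomial i) = C (M i k) := by
  classical
  simp [toMvPolynomial_eq_sum, pderiv_X, Pi.single_apply]

lemma pderiv_toQuadraticMvPolynomial (M : Matrix n n R) (k : n) :
    pderiv k M.toQuadraticMvPolynomial = M.toMvPolynomial k + Mᵀ.toMvPolynomial k := by
  classical
  simp only [toQuadraticMvPolynomial, map_sum, pderiv_mul, pderiv_X, pderiv_toMvPolynomial,
    Pi.single_apply, mul_ite, mul_one, mul_zero, Finset.sum_add_distrib, Finset.sum_ite_eq',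
    Finset.mem_univ, if_true, toMvPolynomial_eq_sum Mᵀ, transpose_apply, mul_comm (X _)]
  exact add_comm _ _

lemma laplacian_toQuadraticMvPolynomial (M : Matrix n n R) :
    laplacian M.toQuadraticMvPolynomial = C (2 * M.trace) := by
  simp only [laplacian_apply, pderiv_toQuadraticMvPolynomial, map_add, pderiv_toMvPolynomial,
    transpose_apply, Finset.sum_add_distrib]
  rw [← map_sum, ← map_add, two_mul, trace]
  rfl

lemma sum_toMvPolynomial_sq (M : Matrix n n R) :
    ∑ i, M.toMvPolynomial i ^ 2 = (Mᵀ * M).toQuadraticMvPolynomial := by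
  simp only [toQuadraticMvPolynomial, toMvPolynomial_eq_sum, mul_apply, transpose_apply, map_sum,
    map_mul, Finset.sum_mul, Finset.mul_sum, sq]
  rw [Finset.sum_comm]
  refine Finset.sum_congr rfl fun j _ => ?_
  rw [Finset.sum_comm]
  refine Finset.sum_congr rfl fun k _ => Finset.sum_congr rfl fun i _ => ?_
  ring

lemma sum_pderiv_toQuadraticMvPolynomial_sq {M : Matrix n n R} (hM : M.IsSymm)
    (hM' : IsIdempotentElem M) :
    ∑ i, pderiv i M.toQuadraticMvPolynomial ^ 2 = C 4 * M.toQuadraticMvPolynomial := by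
  simp_rw [pderiv_toQuadraticMvPolynomial, hM.eq, ← two_mul, mul_pow, ← Finset.mul_sum,
    sum_toMvPolynomial_sq, hM.eq, hM'.eq, map_ofNat]
  norm_num

lemma laplacian_pow_apply_toQuadraticMvPolynomial_pow {M : Matrix n n R} (hM : M.IsSymm)
    (hM' : IsIdempotentElem M) (m : ℕ) :
    (laplacian ^ m) (M.toQuadraticMvPolynomial ^ (m + 1)) =
      C (∏ k ∈ Finset.Icc 1 m, (k + 1) * (4 * k + 2 * M.trace)) * M.toQuadraticMvPolynomial :=
  laplacian_pow_apply_pow (sum_pderiv_toQuadraticMvPolynomial_sq hM hM')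
    (laplacian_toQuadraticMvPolynomial M) m

end Matrix

open Module
open LinearMap (IsProj toMatrix toMatrixOrthonormal toMatrixOrthonormal_apply_apply)

section InnerProductSpace

variable {ι E : Type*} [Fintype ι] [DecidableEq ι] [NormedAddCommGroup E] [InnerProductSpace ℝ E]

lemma Submodule.inner_starProjection_self (K : Submodule ℝ E) [K.HasOrthogonalProjection]
    (x : E) : inner ℝ x (K.starProjection x) = ‖K.starProjection x‖ ^ 2 := by
  rw [← real_inner_self_eq_norm_sq, K.inner_starProjection_left_eq_right,
    K.starProjection_eq_self_iff.mpr (K.starProjection_apply_mem x)]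

variable [FiniteDimensional ℝ E]

lemma eval_repr_toQuadraticMvPolynomial (b : OrthonormalBasis ι ℝ E) (f : E →ₗ[ℝ] E) (x : E) :
    eval (b.repr x) (toMatrixOrthonormal b f).toQuadraticMvPolynomial = inner ℝ x (f x) := by
  have hcoord (i : ι) : ∑ j, inner ℝ (b i) (f (b j)) * inner ℝ (b j) x = inner ℝ (b i) (f x) := by
    conv_rhs => rw [← b.sum_repr' x]
    simp only [map_sum, map_smul, inner_sum, inner_smul_right, mul_comm]
  rw [Matrix.eval_toQuadraticMvPolynomial, ← b.sum_inner_mul_inner]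
  simp only [dotProduct, Matrix.mulVec, toMatrixOrthonormal_apply_apply, b.repr_apply_apply,
    hcoord]
  exact Finset.sum_congr rfl fun i _ => by rw [real_inner_comm]

lemma LinearMap.IsSymmetric.isSymm_toMatrixOrthonormal (b : OrthonormalBasis ι ℝ E)
    {f : E →ₗ[ℝ] E} (hf : f.IsSymmetric) : (toMatrixOrthonormal b f).IsSymm := by
  ext i j
  simp only [Matrix.transpose_apply, toMatrixOrthonormal_apply_apply]
  exact (real_inner_comm _ _).trans (hf _ _)

lemma trace_toMatrixOrthonormal_starProjection (b : OrthonormalBasis ι ℝ E) (K : Submodule ℝ E) :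
    (toMatrixOrthonormal b K.starProjection).trace = finrank ℝ K := by
  have hproj : IsProj K (K.starProjection : E →ₗ[ℝ] E) :=
    ⟨K.starProjection_apply_mem, fun _ => K.starProjection_eq_self_iff.mpr⟩
  change (toMatrix b.toBasis b.toBasis _).trace = _
  rw [← LinearMap.trace_eq_matrix_trace, hproj.trace]

noncomputable def Submodule.normSqMvPolynomial (b : OrthonormalBasis ι ℝ E) (K : Submodule ℝ E) :
    MvPolynomial ι ℝ :=
  (toMatrixOrthonormal b K.starProjection).toQuadraticMvPolynomial

lemma Submodule.eval_repr_normSqMvPolynomial (b : OrthonormalBasis ι ℝ E) (K : Submodule ℝ E)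
    (x : E) : eval (b.repr x) (K.normSqMvPolynomial b) = ‖K.starProjection x‖ ^ 2 :=
  (eval_repr_toQuadraticMvPolynomial b _ x).trans (K.inner_starProjection_self x)

lemma Submodule.laplacian_pow_apply_normSqMvPolynomial_pow (b : OrthonormalBasis ι ℝ E)
    (K : Submodule ℝ E) (m : ℕ) :
    (laplacian ^ m) (K.normSqMvPolynomial b ^ (m + 1)) =
      C (∏ k ∈ Finset.Icc 1 m, ((k : ℝ) + 1) * (4 * k + 2 * finrank ℝ K)) *
        K.normSqMvPolynomial b := by
  rw [← trace_toMatrixOrthonormal_starProjection b K]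
  exact Matrix.laplacian_pow_apply_toQuadraticMvPolynomial_pow
    (K.starProjection_isSymmetric.isSymm_toMatrixOrthonormal b)
    ((ContinuousLinearMap.IsIdempotentElem.toLinearMap K.isIdempotentElem_starProjection).map _) m

end InnerProductSpace

section FusionFrame

variable {ι E : Type*} [Fintype ι] [NormedAddCommGroup E] [InnerProductSpace ℝ E]
  [FiniteDimensional ℝ E]

def IsTightFusionFrame (p : ℕ) (V : ι → Submodule ℝ E) (ω : ι → ℝ) (A : ℝ) : Prop :=
  ∀ x : E, ∑ j, ω j * ‖(V j).starProjection x‖ ^ (2 * p) = A * ‖x‖ ^ (2 * p)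

lemma prod_Icc_succ_mul_four_mul_add (t : ℝ) (m : ℕ) :
    ∏ k ∈ Finset.Icc 1 m, ((k : ℝ) + 1) * (4 * k + 2 * t) =
      (∏ k ∈ Finset.Icc 1 m, 4 * ((k : ℝ) + 1)) * ∏ k ∈ Finset.Icc 1 m, ((k : ℝ) + t / 2) := by
  rw [← Finset.prod_mul_distrib]
  exact Finset.prod_congr rfl fun k _ => by ring

theorem IsTightFusionFrame.order_one {V : ι → Submodule ℝ E} {ω : ι → ℝ} {A : ℝ} {m : ℕ}
    (h : IsTightFusionFrame (m + 1) V ω A) :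
    IsTightFusionFrame 1 V (fun j => ω j * ∏ l ∈ Finset.Icc 1 m, ((l : ℝ) + finrank ℝ (V j) / 2))
      (A * ∏ l ∈ Finset.Icc 1 m, ((l : ℝ) + finrank ℝ E / 2)) := by
  let b := stdOrthonormalBasis ℝ E
  -- `‖x‖² = ‖P_⊤ x‖²`, so both sides of the frame identity are built from the same polynomials
  have hpoly : ∑ j, ω j • (V j).normSqMvPolynomial b ^ (m + 1) =
      A • (⊤ : Submodule ℝ E).normSqMvPolynomial b ^ (m + 1) := by
    refine MvPolynomial.funext fun y => ?_
    obtain ⟨x, rfl⟩ : ∃ x, ⇑(b.repr x) = y := ⟨b.repr.symm (WithLp.toLp 2 y), by simp⟩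
    simpa [smul_eval, Submodule.eval_repr_normSqMvPolynomial, pow_mul,
      Submodule.starProjection_top] using h x
  intro x
  have key := congrArg (eval (b.repr x)) (congrArg (laplacian ^ m) hpoly)
  simp only [map_sum, map_smul, Submodule.laplacian_pow_apply_normSqMvPolynomial_pow, smul_eval,
    map_mul, eval_C, Submodule.eval_repr_normSqMvPolynomial, Submodule.starProjection_top,
    ContinuousLinearMap.id_apply, finrank_top, prod_Icc_succ_mul_four_mul_add] at key
  have hK0 : ∏ k ∈ Finset.Icc 1 m, 4 * ((k : ℝ) + 1) ≠ 0 :=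
    Finset.prod_ne_zero_iff.mpr fun k _ => by positivity
  refine mul_left_cancel₀ hK0 ?_
  rw [mul_one, Finset.mul_sum]
  convert key using 1
  · exact Finset.sum_congr rfl fun j _ => by ring
  · ring

end FusionFrame

lemma proj_apply {d : ℕ} (V : Submodule ℝ (EuclideanSpace ℝ (Fin d)))
    (x : EuclideanSpace ℝ (Fin d)) : proj V x = V.starProjection x :=
  rfl

theorem stmt10_general {d n : ℕ} (p : ℕ) (hp : 1 ≤ p)
    (V : Fin n → Submodule ℝ (EuclideanSpace ℝ (Fin d)))
    (ω : Fin n → ℝ)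
    (A : ℝ) (hA : 0 < A)
    (h : ∀ x : EuclideanSpace ℝ (Fin d),
      ∑ j, ω j * ‖proj (V j) x‖ ^ (2 * p) = A * ‖x‖ ^ (2 * p))
    (ω' : Fin n → ℝ)
    (hω' : ∀ j, ω' j =
      ω j * ∏ l ∈ Finset.Icc 1 (p - 1), ((l : ℝ) + (Module.finrank ℝ (V j) : ℝ) / 2)) :
    ∃ A' : ℝ, 0 < A' ∧ ∀ x : EuclideanSpace ℝ (Fin d),
      ∑ j, ω' j * ‖proj (V j) x‖ ^ 2 = A' * ‖x‖ ^ 2 := by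
  obtain ⟨m, rfl⟩ : ∃ m, p = m + 1 := ⟨p - 1, by omega⟩
  have hframe : IsTightFusionFrame (m + 1) V ω A := h
  refine ⟨A * ∏ l ∈ Finset.Icc 1 m, ((l : ℝ) + d / 2), ?_, fun x => ?_⟩
  · refine mul_pos hA (Finset.prod_pos fun l hl => add_pos_of_pos_of_nonneg ?_ (by positivity))
    exact Nat.cast_pos.mpr (Finset.mem_Icc.mp hl).1
  · simpa [hω', proj_apply, finrank_euclideanSpace_fin] using hframe.order_one x

theorem stmt10 {d n : ℕ} (p : ℕ) (hp : 1 ≤ p)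
    (V : Fin n → Submodule ℝ (EuclideanSpace ℝ (Fin d)))
    (hVbot : ∀ j, V j ≠ ⊥) (hVtop : ∀ j, V j ≠ ⊤)
    (ω : Fin n → ℝ) (hω : ∀ j, 0 < ω j)
    (A : ℝ) (hA : 0 < A)
    (h : ∀ x : EuclideanSpace ℝ (Fin d),
      ∑ j, ω j * ‖proj (V j) x‖ ^ (2 * p) = A * ‖x‖ ^ (2 * p))
    (ω' : Fin n → ℝ)
    (hω' : ∀ j, ω' j =
      ω j * ∏ l ∈ Finset.Icc 1 (p - 1), ((l : ℝ) + (Module.finrank ℝ (V j) : ℝ) / 2)) :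
    ∃ A' : ℝ, 0 < A' ∧ ∀ x : EuclideanSpace ℝ (Fin d),
      ∑ j, ω' j * ‖proj (V j) x‖ ^ 2 = A' * ‖x‖ ^ 2 :=
  stmt10_general p hp V ω A hA h ω' hω'
end
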